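/- Second-moment formula for group-relative advantages: Let G ≥ 1, let R^(1), …, R^(G) : Ω → ℝ be i.i.d. random variables on a probability space (Ω, F, P), and let ε ≥ 0. Then for every g ∈ {1, …, G}, E[(Â^(g))²] = E[σ̂_G² / (σ̂_G + ε)²], where the fraction is interpreted with the convention x/0 = 0. -/

import Mathlib

open MeasureTheory ProbabilityTheory

/-- The group mean `R̄_G = (1/G)·Σ_g R^(g)`. -/
noncomputable def groupMean (G : ℕ) (R : Fin G → ℝ) : ℝ :=
  (∑ g, R g) / G

/-- The group standard deviation `σ̂_G = sqrt((1/G)·Σ_g (R^(g) − R̄_G)²)`. -/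
noncomputable def groupStd (G : ℕ) (R : Fin G → ℝ) : ℝ :=
  Real.sqrt ((∑ g, (R g - groupMean G R) ^ 2) / G)

/-- The group-relative advantage `Â^(g) = (R^(g) − R̄_G)/(σ̂_G + ε)`
(with Lean's convention `x / 0 = 0`). -/
noncomputable def advantage (G : ℕ) (R : Fin G → ℝ) (ε : ℝ) (g : Fin G) : ℝ :=
  (R g - groupMean G R) / (groupStd G R + ε)

lemma groupMean_comp {G : ℕ} (π : Equiv.Perm (Fin G)) (x : Fin G → ℝ) :
    groupMean G (fun i => x (π i)) = groupMean G x := by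
  unfold groupMean
  rw [Equiv.sum_comp π x]

lemma groupStd_comp {G : ℕ} (π : Equiv.Perm (Fin G)) (x : Fin G → ℝ) :
    groupStd G (fun i => x (π i)) = groupStd G x := by
  unfold groupStd
  rw [groupMean_comp, Equiv.sum_comp π (fun i => (x i - groupMean G x) ^ 2)]

lemma advantage_comp {G : ℕ} (π : Equiv.Perm (Fin G)) (x : Fin G → ℝ) (ε : ℝ) (k : Fin G) :
    advantage G (fun i => x (π i)) ε k = advantage G x ε (π k) := by
  unfold advantage
  rw [groupMean_comp, groupStd_comp]

lemma groupMean_measurable {G : ℕ} : Measurable (groupMean G) := by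
  unfold groupMean
  exact (Finset.measurable_sum _ fun i _ => measurable_pi_apply i).div_const _

lemma groupStd_measurable {G : ℕ} : Measurable (groupStd G) := by
  unfold groupStd
  exact Real.continuous_sqrt.measurable.comp
    ((Finset.measurable_sum _ fun i _ =>
      ((measurable_pi_apply i).sub groupMean_measurable).pow_const 2).div_const _)

lemma advantage_measurable {G : ℕ} (ε : ℝ) (k : Fin G) :
    Measurable (fun x => advantage G x ε k) := by
  unfold advantage
  exact ((measurable_pi_apply k).sub groupMean_measurable).div
    (groupStd_measurable.add_const ε)

lemma sq_groupStd {G : ℕ} (x : Fin G → ℝ) :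
    groupStd G x ^ 2 = (∑ i, (x i - groupMean G x) ^ 2) / G := by
  unfold groupStd
  exact Real.sq_sqrt (by positivity)

lemma sum_advantage_sq {G : ℕ} (hG : 1 ≤ G) (x : Fin G → ℝ) (ε : ℝ) :
    ∑ k, advantage G x ε k ^ 2
      = (G : ℝ) * (groupStd G x ^ 2 / (groupStd G x + ε) ^ 2) := by
  have hG0 : (G : ℝ) ≠ 0 := Nat.cast_ne_zero.mpr (by omega)
  unfold advantage
  simp_rw [div_pow]
  rw [← Finset.sum_div, sq_groupStd]
  have hA : (G : ℝ) * ((∑ i, (x i - groupMean G x) ^ 2) / G) = ∑ i, (x i - groupMean G x) ^ 2 := by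
    field_simp
  rw [← mul_div_assoc, hA]

lemma advantage_sq_le {G : ℕ} (hG : 1 ≤ G) (x : Fin G → ℝ) {ε : ℝ} (hε : 0 ≤ ε) (k : Fin G) :
    advantage G x ε k ^ 2 ≤ G := by
  have hG0 : (G : ℝ) ≠ 0 := Nat.cast_ne_zero.mpr (by omega)
  have hs : 0 ≤ groupStd G x := Real.sqrt_nonneg _
  rcases eq_or_lt_of_le (by positivity : (0:ℝ) ≤ groupStd G x + ε) with h0 | hpos
  · unfold advantage
    rw [← h0, div_zero]
    simpa using (Nat.one_le_cast (α := ℝ)).mpr hG |>.trans' zero_le_one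
  · unfold advantage
    rw [div_pow, div_le_iff₀ (by positivity)]
    have h1 : (x k - groupMean G x) ^ 2 ≤ ∑ i, (x i - groupMean G x) ^ 2 :=
      Finset.single_le_sum (f := fun i => (x i - groupMean G x) ^ 2)
        (fun i _ => sq_nonneg _) (Finset.mem_univ k)
    have h2 : (∑ i, (x i - groupMean G x) ^ 2) = (G : ℝ) * groupStd G x ^ 2 := by
      rw [sq_groupStd]; field_simp
    have h3 : groupStd G x ^ 2 ≤ (groupStd G x + ε) ^ 2 := by nlinarith
    calc (x k - groupMean G x) ^ 2 ≤ (G : ℝ) * groupStd G x ^ 2 := h2 ▸ h1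
      _ ≤ (G : ℝ) * (groupStd G x + ε) ^ 2 := by
          have : (0:ℝ) ≤ (G:ℝ) := Nat.cast_nonneg _
          nlinarith

/-- Second-moment formula: for i.i.d. rewards and stabilizer `ε ≥ 0`,
`E[(Â^(g))²] = E[σ̂_G² / (σ̂_G + ε)²]`. -/
theorem advantage_second_moment
    {Ω : Type*} [MeasureSpace Ω] [IsProbabilityMeasure (ℙ : Measure Ω)]
    (G : ℕ) (hG : 1 ≤ G) (R : Fin G → Ω → ℝ)
    (hmeas : ∀ i, Measurable (R i))
    (hindep : iIndepFun R ℙ)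
    (hident : ∀ i j, IdentDistrib (R i) (R j) ℙ ℙ)
    (ε : ℝ) (hε : 0 ≤ ε) (g : Fin G) :
    ∫ ω, (advantage G (fun i => R i ω) ε g) ^ 2 ∂ℙ
      = ∫ ω, (groupStd G (fun i => R i ω)) ^ 2
          / (groupStd G (fun i => R i ω) + ε) ^ 2 ∂ℙ := by
  classical
  have hG0 : (G : ℝ) ≠ 0 := Nat.cast_ne_zero.mpr (by omega)
  set J : Ω → (Fin G → ℝ) := fun ω i => R i ω with hJdef
  have hJmeas : Measurable J := measurable_pi_lambda _ hmeas
  haveI : ∀ i : Fin G, SigmaFinite ((ℙ : Measure Ω).map (R i)) := fun i =>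
    haveI := Measure.isProbabilityMeasure_map (μ := (ℙ : Measure Ω)) (hmeas i).aemeasurable
    inferInstance
  -- the joint law is a product measure
  have hpi : (ℙ : Measure Ω).map J = Measure.pi (fun i => (ℙ : Measure Ω).map (R i)) := by
    refine (Measure.pi_eq (μ := fun i => (ℙ : Measure Ω).map (R i)) fun s hs => ?_).symm
    rw [Measure.map_apply hJmeas (MeasurableSet.univ_pi hs)]
    have hpre : J ⁻¹' (Set.pi Set.univ s) = ⋂ i ∈ Finset.univ, R i ⁻¹' s i := by
      ext ω; simp [Set.mem_pi, hJdef]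
    rw [hpre, hindep.measure_inter_preimage_eq_mul Finset.univ (fun i _ => hs i)]
    exact Finset.prod_congr rfl fun i _ =>
      (Measure.map_apply (hmeas i) (hs i)).symm
  have hconst : (fun i : Fin G => (ℙ : Measure Ω).map (R i)) = fun _ : Fin G => (ℙ : Measure Ω).map (R g) :=
    funext fun i => (hident i g).map_eq
  -- all advantages have the same second moment
  have hkey : ∀ g' : Fin G,
      ∫ ω, (advantage G (J ω) ε g') ^ 2 ∂ℙ = ∫ ω, (advantage G (J ω) ε g) ^ 2 ∂ℙ := by
    intro g'
    have h1 : ∀ k : Fin G, ∫ ω, (advantage G (J ω) ε k) ^ 2 ∂ℙ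
        = ∫ x, (advantage G x ε k) ^ 2 ∂(Measure.pi fun _ : Fin G => (ℙ : Measure Ω).map (R g)) := by
      intro k
      rw [← hconst, ← hpi]
      exact (integral_map hJmeas.aemeasurable
        ((advantage_measurable ε k).pow_const 2).aestronglyMeasurable).symm
    rw [h1 g', h1 g]
    set π : Equiv.Perm (Fin G) := Equiv.swap g g' with hπ
    haveI : IsProbabilityMeasure ((ℙ : Measure Ω).map (R g)) :=
      Measure.isProbabilityMeasure_map (μ := (ℙ : Measure Ω)) (hmeas g).aemeasurable
    have hpres := measurePreserving_piCongrLeft (fun _ : Fin G => (ℙ : Measure Ω).map (R g)) π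
    set T := MeasurableEquiv.piCongrLeft (fun _ : Fin G => ℝ) π with hT
    have hTval : ∀ (x : Fin G → ℝ) (i : Fin G), T x i = x (π.symm i) := by
      intro x i
      have h := Equiv.piCongrLeft_apply_apply (fun _ : Fin G => ℝ) π x (π.symm i)
      rw [Equiv.apply_symm_apply] at h
      simpa [hT, MeasurableEquiv.coe_piCongrLeft] using h
    have hcomp := hpres.integral_comp T.measurableEmbedding
      (fun x => (advantage G x ε g') ^ 2)
    rw [← hcomp]
    refine integral_congr_ae (Filter.Eventually.of_forall fun x => ?_)
    have hTx : T x = fun i => x (π.symm i) := funext (hTval x)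
    show advantage G (T x) ε g' ^ 2 = advantage G x ε g ^ 2
    rw [hTx, advantage_comp π.symm x ε g']
    simp [hπ, Equiv.symm_swap, Equiv.swap_apply_right]
  -- integrability
  have hint : ∀ k : Fin G, Integrable (fun ω => (advantage G (J ω) ε k) ^ 2) ℙ := by
    intro k
    refine Integrable.mono' (integrable_const (G : ℝ))
      (((advantage_measurable ε k).pow_const 2).comp hJmeas).aestronglyMeasurable
      (Filter.Eventually.of_forall fun ω => ?_)
    rw [Real.norm_eq_abs, abs_of_nonneg (sq_nonneg _)]
    exact advantage_sq_le hG (J ω) hε k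
  have hsum : (fun ω => ∑ k, (advantage G (J ω) ε k) ^ 2)
      = fun ω => (G : ℝ) * (groupStd G (J ω) ^ 2 / (groupStd G (J ω) + ε) ^ 2) :=
    funext fun ω => sum_advantage_sq hG (J ω) ε
  have hmain : (G : ℝ) * ∫ ω, (advantage G (J ω) ε g) ^ 2 ∂ℙ
      = (G : ℝ) * ∫ ω, groupStd G (J ω) ^ 2 / (groupStd G (J ω) + ε) ^ 2 ∂ℙ := by
    calc (G : ℝ) * ∫ ω, (advantage G (J ω) ε g) ^ 2 ∂ℙ
        = ∑ k : Fin G, ∫ ω, (advantage G (J ω) ε k) ^ 2 ∂ℙ := by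
          rw [Finset.sum_congr rfl fun k _ => hkey k]
          simp [mul_comm]
      _ = ∫ ω, ∑ k, (advantage G (J ω) ε k) ^ 2 ∂ℙ :=
          (integral_finset_sum Finset.univ fun k _ => hint k).symm
      _ = ∫ ω, (G : ℝ) * (groupStd G (J ω) ^ 2 / (groupStd G (J ω) + ε) ^ 2) ∂ℙ := by
          rw [hsum]
      _ = (G : ℝ) * ∫ ω, groupStd G (J ω) ^ 2 / (groupStd G (J ω) + ε) ^ 2 ∂ℙ :=
          integral_const_mul _ _
  exact mul_left_cancel₀ hG0 hmain
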